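/- Pattern intersection preserves matching: if p₁ ▷ v ⇝ θ₁ and p₂ ▷ v ⇝ θ₂, and the pattern intersection p₁ ∩ p₂ is defined, then there exists a substitution θ such that (p₁ ∩ p₂) ▷ v ⇝ θ. -/

import Mathlib

set_option maxHeartbeats 1000000

/-! ## Names -/

abbrev SortName := String
abbrev ConName := String
abbrev DataName := String
abbrev Var := String

/-! ## Types -/

inductive Ty : Type
  | unit : Ty
  | arr : Ty → Ty → Ty
  | prod : Ty → Ty → Ty
  | sort : SortName → Ty
  | inter : Ty → Ty → Ty
  deriving DecidableEq

inductive UTy : Type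
  | unit : UTy
  | arr : UTy → UTy → UTy
  | prod : UTy → UTy → UTy
  | data : DataName → UTy
  deriving DecidableEq

/-! ## Signatures -/

inductive Decl : Type
  | subsort : SortName → SortName → Decl
  | con : ConName → Ty → SortName → Decl
  deriving DecidableEq

structure Block : Type where
  sorts : List (SortName × DataName)
  decls : List Decl
  deriving DecidableEq

/-- A signature is a finite sequence of blocks (later blocks to the right). -/
abbrev Sig := List Block

def Block.domS (b : Block) : List SortName := b.sorts.map Prod.fst

def sigDom (Sgn : Sig) : List SortName := Sgn.foldr (fun b acc => b.domS ++ acc) []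

def declaresSub (Sgn : Sig) (s1 s2 : SortName) : Prop :=
  ∃ b ∈ Sgn, Decl.subsort s1 s2 ∈ b.decls

def declaresCon (Sgn : Sig) (c : ConName) (A : Ty) (s : SortName) : Prop :=
  ∃ b ∈ Sgn, Decl.con c A s ∈ b.decls

def declaresSort (Sgn : Sig) (s : SortName) (d : DataName) : Prop :=
  ∃ b ∈ Sgn, (s, d) ∈ b.sorts

/-! ## Subsorting and subtyping -/

inductive Subsort (Sgn : Sig) : SortName → SortName → Prop
  | assum {s1 s2} : declaresSub Sgn s1 s2 → Subsort Sgn s1 s2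
  | refl {s} : s ∈ sigDom Sgn → Subsort Sgn s s
  | trans {s1 s2 s3} : Subsort Sgn s1 s2 → Subsort Sgn s2 s3 → Subsort Sgn s1 s3

inductive Subty (Sgn : Sig) : Ty → Ty → Prop
  | unit : Subty Sgn .unit .unit
  | prod {A1 A2 B1 B2} : Subty Sgn A1 B1 → Subty Sgn A2 B2 →
      Subty Sgn (.prod A1 A2) (.prod B1 B2)
  | sort {s t} : Subsort Sgn s t → Subty Sgn (.sort s) (.sort t)
  | arr {A1 A2 B1 B2} : Subty Sgn B1 A1 → Subty Sgn A2 B2 →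
      Subty Sgn (.arr A1 A2) (.arr B1 B2)
  | interL1 {A1 A2 B} : Subty Sgn A1 B → Subty Sgn (.inter A1 A2) B
  | interL2 {A1 A2 B} : Subty Sgn A2 B → Subty Sgn (.inter A1 A2) B
  | interR {A B1 B2} : Subty Sgn A B1 → Subty Sgn A B2 → Subty Sgn A (.inter B1 B2)

/-! ## Unrefined signature, refinement, well-formedness -/

/-- The unrefined signature Ψ: each constructor has a unique typing c : τ → d. -/
structure UrSig : Type where
  cons : List (ConName × UTy × DataName)
  unique : ∀ c t1 d1 t2 d2, (c, t1, d1) ∈ cons → (c, t2, d2) ∈ cons → t1 = t2 ∧ d1 = d2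

def UrSig.typing (Psi : UrSig) (c : ConName) (t : UTy) (d : DataName) : Prop :=
  (c, t, d) ∈ Psi.cons

inductive Refines (Sgn : Sig) : Ty → UTy → Prop
  | unit : Refines Sgn .unit .unit
  | arr {A1 A2 t1 t2} : Refines Sgn A1 t1 → Refines Sgn A2 t2 →
      Refines Sgn (.arr A1 A2) (.arr t1 t2)
  | prod {A1 A2 t1 t2} : Refines Sgn A1 t1 → Refines Sgn A2 t2 →
      Refines Sgn (.prod A1 A2) (.prod t1 t2)
  | sort {s d} : declaresSort Sgn s d → Refines Sgn (.sort s) (.data d)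
  | inter {A1 A2 t} : Refines Sgn A1 t → Refines Sgn A2 t → Refines Sgn (.inter A1 A2) t

inductive TypeWF (Sgn : Sig) : Ty → Prop
  | unit : TypeWF Sgn .unit
  | arr {A1 A2} : TypeWF Sgn A1 → TypeWF Sgn A2 → TypeWF Sgn (.arr A1 A2)
  | prod {A1 A2} : TypeWF Sgn A1 → TypeWF Sgn A2 → TypeWF Sgn (.prod A1 A2)
  | sort {s} : s ∈ sigDom Sgn → TypeWF Sgn (.sort s)
  | inter {A1 A2 t} : TypeWF Sgn A1 → TypeWF Sgn A2 →
      Refines Sgn A1 t → Refines Sgn A2 t → TypeWF Sgn (.inter A1 A2)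

/-- Σ ⊢ c : A → s contype. -/
def ConTypeWF (Psi : UrSig) (Sgn : Sig) (c : ConName) (A : Ty) (s : SortName) : Prop :=
  TypeWF Sgn A ∧ TypeWF Sgn (.sort s) ∧
    ∃ t d, Psi.typing c t d ∧ Refines Sgn (.arr A (.sort s)) (.arr t (.data d))

/-- Constructor typing Σ ⊢ c : A → s. -/
def ConTyping (Sgn : Sig) (c : ConName) (A : Ty) (s : SortName) : Prop :=
  ∃ s', declaresCon Sgn c A s' ∧ Subsort Sgn s' s

/-! ## Signature well-formedness -/

/-- safe(Σ; blk; c : A→s at t). -/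
def SafeConAt (Sgn : Sig) (blk : Block) (c : ConName) (A : Ty) (s t : SortName) : Prop :=
  ∃ A' s', declaresCon Sgn c A' s' ∧ Subsort (Sgn ++ [blk]) s' t ∧
    Subsort (Sgn ++ [blk]) s s' ∧ Subty (Sgn ++ [blk]) A A'

/-- Σ; S ⊢ K ∋ elem safe, where the block blk is S⟨K⟩. -/
def ElemSafe (Psi : UrSig) (Sgn : Sig) (blk : Block) : Decl → Prop
  | .subsort s1 s2 =>
      (s1 ∈ sigDom Sgn ∨ s1 ∈ blk.domS) ∧ (s2 ∈ sigDom Sgn ∨ s2 ∈ blk.domS)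
  | .con c A s =>
      s ∈ blk.domS ∧ ConTypeWF Psi (Sgn ++ [blk]) c A s ∧
        ∀ t ∈ sigDom Sgn, Subsort (Sgn ++ [blk]) s t → SafeConAt Sgn blk c A s t

inductive SigWF (Psi : UrSig) : Sig → Prop
  | nil : SigWF Psi []
  | block {Sgn blk} :
      SigWF Psi Sgn →
      (∀ s ∈ blk.domS, s ∉ sigDom Sgn) →
      (∀ t1 ∈ sigDom Sgn, ∀ t2 ∈ sigDom Sgn,
        (Subsort Sgn t1 t2 ↔ Subsort (Sgn ++ [blk]) t1 t2)) →
      (∀ elem ∈ blk.decls, ElemSafe Psi Sgn blk elem) →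
      SigWF Psi (Sgn ++ [blk])

/-! ## Preservation of subsorting; non-adjacency; extension -/

/-- Σ' preserves subsorting of Σ. -/
def PreservesSub (Sgn Sgn' : Sig) : Prop :=
  ∀ s ∈ sigDom Sgn, ∀ t ∈ sigDom Sgn, Subsort (Sgn ++ Sgn') s t → Subsort Sgn s t

def Ty.sortsOf : Ty → List SortName
  | .unit => []
  | .arr A B => A.sortsOf ++ B.sortsOf
  | .prod A B => A.sortsOf ++ B.sortsOf
  | .sort s => [s]
  | .inter A B => A.sortsOf ++ B.sortsOf

def Decl.mentions : Decl → List SortName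
  | .subsort s1 s2 => [s1, s2]
  | .con _ A s => A.sortsOf ++ [s]

def Block.mentions (b : Block) : List SortName :=
  b.decls.foldr (fun d acc => d.mentions ++ acc) []

def sigMentions (Sgn : Sig) : List SortName :=
  Sgn.foldr (fun b acc => b.mentions ++ acc) []

/-- Two signature parts are non-adjacent if no declaration of either mentions
a sort declared by the other. -/
def NonAdjacent (Sg1 Sg2 : Sig) : Prop :=
  (∀ s ∈ sigMentions Sg1, s ∉ sigDom Sg2) ∧ (∀ s ∈ sigMentions Sg2, s ∉ sigDom Sg1)

/-- Σ₊ extends Σ (Σ₊ ≽ Σ): the block sequence of Σ is a subsequence of that of Σ₊. -/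
def SigExtends (Sgp Sgn : Sig) : Prop := List.Sublist Sgn Sgp

/-! ## Patterns -/

inductive Pat : Type
  | wild : Pat
  | empty : Pat
  | con : ConName → Pat → Pat
  | pair : Pat → Pat → Pat
  | as_ : Var → Pat → Pat
  | or : Pat → Pat → Pat
  | unit : Pat
  deriving DecidableEq

def Pat.boundVars : Pat → List Var
  | .wild => []
  | .empty => []
  | .unit => []
  | .con _ p => p.boundVars
  | .pair p1 p2 => p1.boundVars ++ p2.boundVars
  | .as_ x p => x :: p.boundVars
  | .or p1 p2 => p1.boundVars ++ p2.boundVars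

/-- Partial pattern intersection p₁ ∩ p₂. -/
def pinter : Pat → Pat → Option Pat
  | .empty, _ => some .empty
  | p, .empty =>
      match p with
      | _ => some .empty
  | .wild, p => some p
  | p, .wild => some p
  | .or p1 p2, p => do
      let q1 ← pinter p1 p
      let q2 ← pinter p2 p
      pure (.or q1 q2)
  | p, .or p1 p2 => do
      let q1 ← pinter p p1
      let q2 ← pinter p p2
      pure (.or q1 q2)
  | .con c1 p1, .con c2 p2 =>
      if c1 = c2 then (pinter p1 p2).map (Pat.con c1) else some .empty
  | .pair _ _, .con _ _ => some .empty
  | .con _ _, .pair _ _ => some .empty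
  | .pair p11 p12, .pair p21 p22 => do
      let q1 ← pinter p11 p21
      let q2 ← pinter p12 p22
      pure (.pair q1 q2)
  | _, _ => none

/-- The constructors of Ψ other than c. -/
def otherCons (Psi : UrSig) (c : ConName) : List ConName :=
  ((Psi.cons.map (fun x => x.1)).filter (fun c' => c' ≠ c)).dedup

/-- Pattern complement ¬p, relative to Ψ (partial). -/
def pcomp (Psi : UrSig) : Pat → Option Pat
  | .wild => some .empty
  | .empty => some .wild
  | .as_ _ p => pcomp Psi p
  | .pair p1 p2 => do
      let q1 ← pcomp Psi p1
      let q2 ← pcomp Psi p2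
      pure (.or (.pair q1 .wild) (.pair .wild q2))
  | .or p1 p2 => do
      let q1 ← pcomp Psi p1
      let q2 ← pcomp Psi p2
      pinter q1 q2
  | .con c p => do
      let q ← pcomp Psi p
      pure ((otherCons Psi c).foldl (fun acc c' => Pat.or acc (Pat.con c' .wild)) (Pat.con c q))
  | .unit => none

/-- Pattern typing Ψ ⊢ p : τ. -/
inductive PatType (Psi : UrSig) : Pat → UTy → Prop
  | wild {t} : PatType Psi .wild t
  | empty {t} : PatType Psi .empty t
  | as_ {x p t} : PatType Psi p t → PatType Psi (.as_ x p) t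
  | unit : PatType Psi .unit .unit
  | or {p1 p2 t} : PatType Psi p1 t → PatType Psi p2 t → PatType Psi (.or p1 p2) t
  | pair {p1 p2 t1 t2} : PatType Psi p1 t1 → PatType Psi p2 t2 →
      PatType Psi (.pair p1 p2) (.prod t1 t2)
  | con {c p t d} : Psi.typing c t d → PatType Psi p t → PatType Psi (.con c p) (.data d)

/-! ## Contexts and the intersect function -/

abbrev Ctx := List (Var × Ty)

/-- Membership in intersect(Σ; A; p): (Γ'; B) is a track of the intersection of A with p. -/
inductive InIntersect (Sgn : Sig) : Pat → Ty → Ctx → Ty → Prop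
  | wild {A} : InIntersect Sgn .wild A [] A
  | as_ {x p A G B} : InIntersect Sgn p A G B →
      InIntersect Sgn (.as_ x p) A (G ++ [(x, B)]) B
  | or1 {p1 p2 A G B} : InIntersect Sgn p1 A G B → InIntersect Sgn (.or p1 p2) A G B
  | or2 {p1 p2 A G B} : InIntersect Sgn p2 A G B → InIntersect Sgn (.or p1 p2) A G B
  | pair {p1 p2 A1 A2 G1 G2 B1 B2} :
      InIntersect Sgn p1 A1 G1 B1 → InIntersect Sgn p2 A2 G2 B2 →
      InIntersect Sgn (.pair p1 p2) (.prod A1 A2) (G1 ++ G2) (.prod B1 B2)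
  | con {c p0 Ac sc s G B} : declaresCon Sgn c Ac sc → Subsort Sgn sc s →
      InIntersect Sgn p0 Ac G B → InIntersect Sgn (.con c p0) (.sort s) G (.sort sc)

/-- intersect(Σ; A; p), as a set of tracks. -/
def intersect (Sgn : Sig) (A : Ty) (p : Pat) : Set (Ctx × Ty) :=
  { r | InIntersect Sgn p A r.1 r.2 }

/-- Σ ⊢ Γ₊ ≼ Γ : contexts declare the same variables in order, with pointwise subtyping. -/
def CtxStronger (Sgn : Sig) (Gp G : Ctx) : Prop :=
  List.Forall₂ (fun a b => a.1 = b.1 ∧ Subty Sgn a.2 b.2) Gp G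

/-- Σ ⊢ T₊ ≤trk T. -/
def TracksStronger (Sgn : Sig) (Tp T : Set (Ctx × Ty)) : Prop :=
  ∀ r ∈ Tp, ∃ r' ∈ T, CtxStronger Sgn r.1 r'.1 ∧ Subty Sgn r.2 r'.2

/-! ## Expressions -/

mutual
inductive Exp : Type
  | var : Var → Exp
  | lam : Var → Exp → Exp
  | app : Exp → Exp → Exp
  | pair : Exp → Exp → Exp
  | unit : Exp
  | con : ConName → Exp → Exp
  | case_ : Exp → Arms → Exp
  | declare : Sig → Exp → Exp

inductive Arms : Type
  | nil : Arms
  | cons : Pat → Exp → Arms → Arms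
end

inductive IsValue : Exp → Prop
  | var {x} : IsValue (.var x)
  | lam {x e} : IsValue (.lam x e)
  | pair {v1 v2} : IsValue v1 → IsValue v2 → IsValue (.pair v1 v2)
  | unit : IsValue .unit
  | con {c v} : IsValue v → IsValue (.con c v)

/-! ## Substitution -/

mutual
def substE (v : Exp) (x : Var) : Exp → Exp
  | .var y => if y = x then v else .var y
  | .lam y e => if y = x then .lam y e else .lam y (substE v x e)
  | .app e1 e2 => .app (substE v x e1) (substE v x e2)
  | .pair e1 e2 => .pair (substE v x e1) (substE v x e2)
  | .unit => .unit
  | .con c e => .con c (substE v x e)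
  | .case_ e ms => .case_ (substE v x e) (substA v x ms)
  | .declare sg e => .declare sg (substE v x e)

def substA (v : Exp) (x : Var) : Arms → Arms
  | .nil => .nil
  | .cons p e ms =>
      .cons p (if x ∈ p.boundVars then e else substE v x e) (substA v x ms)
end

/-- Apply a substitution θ (a list of value/variable pairs). -/
def applySubst (th : List (Var × Exp)) (e : Exp) : Exp :=
  th.foldl (fun e xv => substE xv.2 xv.1 e) e

/-! ## Pattern matching -/

inductive Matches : Pat → Exp → List (Var × Exp) → Prop
  | wild {v} : Matches .wild v []
  | as_ {x p v th} : Matches p v th → Matches (.as_ x p) v (th ++ [(x, v)])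
  | or1 {p1 p2 v th} : Matches p1 v th → Matches (.or p1 p2) v th
  | or2 {p1 p2 v th} : Matches p2 v th → Matches (.or p1 p2) v th
  | con {c p v th} : Matches p v th → Matches (.con c p) (.con c v) th
  | unit : Matches .unit .unit []
  | pair {p1 p2 v1 v2 th1 th2} : Matches p1 v1 th1 → Matches p2 v2 th2 →
      Matches (.pair p1 p2) (.pair v1 v2) (th1 ++ th2)

inductive NoMatch : Exp → Pat → Prop
  | empty {v} : NoMatch v .empty
  | as_ {v x p} : NoMatch v p → NoMatch v (.as_ x p)
  | or {v p1 p2} : NoMatch v p1 → NoMatch v p2 → NoMatch v (.or p1 p2)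
  | conHead {v c p} : (∀ v', v ≠ .con c v') → NoMatch v (.con c p)
  | conInner {c v p} : NoMatch v p → NoMatch (.con c v) (.con c p)
  | unit {v} : v ≠ .unit → NoMatch v .unit
  | pairHead {v p1 p2} : (∀ v1 v2, v ≠ .pair v1 v2) → NoMatch v (.pair p1 p2)
  | pair1 {v1 v2 p1 p2} : NoMatch v1 p1 → NoMatch (.pair v1 v2) (.pair p1 p2)
  | pair2 {v1 v2 p1 p2} : NoMatch v2 p2 → NoMatch (.pair v1 v2) (.pair p1 p2)

/-! ## Typing -/

mutual
/-- Σ; Γ ⊢ e : A (type assignment). -/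
inductive HasType (Psi : UrSig) : Sig → Ctx → Exp → Ty → Prop
  | var {Sgn G x A} : (x, A) ∈ G → HasType Psi Sgn G (.var x) A
  | sub {Sgn G e A B} : HasType Psi Sgn G e A → Subty Sgn A B → HasType Psi Sgn G e B
  | lam {Sgn G x e A B} : HasType Psi Sgn (G ++ [(x, A)]) e B →
      HasType Psi Sgn G (.lam x e) (.arr A B)
  | app {Sgn G e1 e2 A B} : HasType Psi Sgn G e1 (.arr A B) → HasType Psi Sgn G e2 A →
      HasType Psi Sgn G (.app e1 e2) B
  | inter {Sgn G v A1 A2} : IsValue v → HasType Psi Sgn G v A1 → HasType Psi Sgn G v A2 →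
      HasType Psi Sgn G v (.inter A1 A2)
  | pair {Sgn G e1 e2 A1 A2} : HasType Psi Sgn G e1 A1 → HasType Psi Sgn G e2 A2 →
      HasType Psi Sgn G (.pair e1 e2) (.prod A1 A2)
  | unit {Sgn G} : HasType Psi Sgn G .unit .unit
  | dataI {Sgn G c e A s} : ConTyping Sgn c A s → HasType Psi Sgn G e A →
      HasType Psi Sgn G (.con c e) (.sort s)
  | dataE {Sgn G e ms A B} : HasType Psi Sgn G e A → MatchType Psi Sgn G A .wild ms B →
      HasType Psi Sgn G (.case_ e ms) B
  | declare {Sgn Sg' G e B} : SigWF Psi (Sgn ++ Sg') → TypeWF Sgn B →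
      HasType Psi (Sgn ++ Sg') G e B → HasType Psi Sgn G (.declare Sg' e) B

/-- Σ; Γ; A; p ⊢ ms : D (match typing, with residual pattern p). -/
inductive MatchType (Psi : UrSig) : Sig → Ctx → Ty → Pat → Arms → Ty → Prop
  | nil {Sgn G A p D} : intersect Sgn A p = (∅ : Set (Ctx × Ty)) →
      MatchType Psi Sgn G A p .nil D
  | cons {Sgn G A p p1 e1 ms D t q np1 q'} :
      Refines Sgn A t → PatType Psi p1 t →
      pinter p p1 = some q →
      (∀ G' B, (G', B) ∈ intersect Sgn A q → HasType Psi Sgn (G ++ G') e1 D) →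
      pcomp Psi p1 = some np1 →
      pinter p np1 = some q' →
      MatchType Psi Sgn G A q' ms D →
      MatchType Psi Sgn G A p (.cons p1 e1 ms) D
end

/-- Substitution typing Σ; Γ ⊢ θ : Γ'. -/
inductive SubstType (Psi : UrSig) (Sgn : Sig) (G : Ctx) : List (Var × Exp) → Ctx → Prop
  | nil : SubstType Psi Sgn G [] []
  | cons {th G' v x A} : SubstType Psi Sgn G th G' → IsValue v → HasType Psi Sgn G v A →
      SubstType Psi Sgn G (th ++ [(x, v)]) (G' ++ [(x, A)])

/-! ## Operational semantics -/

inductive ArmsStep (v : Exp) : Arms → Exp → Prop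
  | match_ {p1 e1 ms th} : Matches p1 v th → ArmsStep v (.cons p1 e1 ms) (applySubst th e1)
  | else_ {p1 e1 ms e'} : NoMatch v p1 → ArmsStep v ms e' → ArmsStep v (.cons p1 e1 ms) e'

inductive Step : Exp → Exp → Prop
  | beta {x e v} : IsValue v → Step (.app (.lam x e) v) (substE v x e)
  | declare {sg e} : Step (.declare sg e) e
  | case_ {v ms e'} : IsValue v → ArmsStep v ms e' → Step (.case_ v ms) e'
  | appL {e1 e1' e2} : Step e1 e1' → Step (.app e1 e2) (.app e1' e2)
  | appR {v e2 e2'} : IsValue v → Step e2 e2' → Step (.app v e2) (.app v e2')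
  | conArg {c e e'} : Step e e' → Step (.con c e) (.con c e')
  | pairL {e1 e1' e2} : Step e1 e1' → Step (.pair e1 e2) (.pair e1' e2)
  | pairR {v e2 e2'} : IsValue v → Step e2 e2' → Step (.pair v e2) (.pair v e2')
  | caseScrut {e e' ms} : Step e e' → Step (.case_ e ms) (.case_ e' ms)

/-! ## Typing derivations in which every type is well-formed under the local signature -/

mutual
inductive HasTypeW (Psi : UrSig) : Sig → Ctx → Exp → Ty → Prop
  | var {Sgn G x A} : (x, A) ∈ G → TypeWF Sgn A → HasTypeW Psi Sgn G (.var x) A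
  | sub {Sgn G e A B} : HasTypeW Psi Sgn G e A → Subty Sgn A B → TypeWF Sgn B →
      HasTypeW Psi Sgn G e B
  | lam {Sgn G x e A B} : TypeWF Sgn (.arr A B) → HasTypeW Psi Sgn (G ++ [(x, A)]) e B →
      HasTypeW Psi Sgn G (.lam x e) (.arr A B)
  | app {Sgn G e1 e2 A B} : HasTypeW Psi Sgn G e1 (.arr A B) → HasTypeW Psi Sgn G e2 A →
      HasTypeW Psi Sgn G (.app e1 e2) B
  | inter {Sgn G v A1 A2} : IsValue v → TypeWF Sgn (.inter A1 A2) →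
      HasTypeW Psi Sgn G v A1 → HasTypeW Psi Sgn G v A2 →
      HasTypeW Psi Sgn G v (.inter A1 A2)
  | pair {Sgn G e1 e2 A1 A2} : HasTypeW Psi Sgn G e1 A1 → HasTypeW Psi Sgn G e2 A2 →
      HasTypeW Psi Sgn G (.pair e1 e2) (.prod A1 A2)
  | unit {Sgn G} : HasTypeW Psi Sgn G .unit .unit
  | dataI {Sgn G c e A s} : ConTyping Sgn c A s → TypeWF Sgn A → TypeWF Sgn (.sort s) →
      HasTypeW Psi Sgn G e A → HasTypeW Psi Sgn G (.con c e) (.sort s)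
  | dataE {Sgn G e ms A B} : HasTypeW Psi Sgn G e A → TypeWF Sgn A → TypeWF Sgn B →
      MatchTypeW Psi Sgn G A .wild ms B → HasTypeW Psi Sgn G (.case_ e ms) B
  | declare {Sgn Sg' G e B} : SigWF Psi (Sgn ++ Sg') → TypeWF Sgn B →
      HasTypeW Psi (Sgn ++ Sg') G e B → HasTypeW Psi Sgn G (.declare Sg' e) B

inductive MatchTypeW (Psi : UrSig) : Sig → Ctx → Ty → Pat → Arms → Ty → Prop
  | nil {Sgn G A p D} : intersect Sgn A p = (∅ : Set (Ctx × Ty)) →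
      MatchTypeW Psi Sgn G A p .nil D
  | cons {Sgn G A p p1 e1 ms D t q np1 q'} :
      Refines Sgn A t → PatType Psi p1 t →
      pinter p p1 = some q →
      (∀ G' B, (G', B) ∈ intersect Sgn A q → HasTypeW Psi Sgn (G ++ G') e1 D) →
      pcomp Psi p1 = some np1 →
      pinter p np1 = some q' →
      MatchTypeW Psi Sgn G A q' ms D →
      MatchTypeW Psi Sgn G A p (.cons p1 e1 ms) D
end

/-! ## Annotated expressions and the bidirectional system -/

mutual
inductive AExp : Type
  | var : Var → AExp
  | lam : Var → AExp → AExp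
  | app : AExp → AExp → AExp
  | pair : AExp → AExp → AExp
  | unit : AExp
  | con : ConName → AExp → AExp
  | case_ : AExp → AArms → AExp
  | declare : Sig → AExp → AExp
  | anno : AExp → List Ty → AExp

inductive AArms : Type
  | nil : AArms
  | cons : Pat → AExp → AArms → AArms
end

inductive IsAValue : AExp → Prop
  | var {x} : IsAValue (.var x)
  | lam {x e} : IsAValue (.lam x e)
  | pair {v1 v2} : IsAValue v1 → IsAValue v2 → IsAValue (.pair v1 v2)
  | unit : IsAValue .unit
  | con {c v} : IsAValue v → IsAValue (.con c v)
  | anno {v As} : IsAValue v → IsAValue (.anno v As)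

mutual
/-- |e|: erase all annotations. -/
def eraseE : AExp → Exp
  | .var x => .var x
  | .lam x e => .lam x (eraseE e)
  | .app e1 e2 => .app (eraseE e1) (eraseE e2)
  | .pair e1 e2 => .pair (eraseE e1) (eraseE e2)
  | .unit => .unit
  | .con c e => .con c (eraseE e)
  | .case_ e ms => .case_ (eraseE e) (eraseA ms)
  | .declare sg e => .declare sg (eraseE e)
  | .anno e _ => eraseE e

def eraseA : AArms → Arms
  | .nil => .nil
  | .cons p e ms => .cons p (eraseE e) (eraseA ms)
end

mutual
/-- Σ; Γ ⊢ e ⇐ A (checking). -/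
inductive Chk (Psi : UrSig) : Sig → Ctx → AExp → Ty → Prop
  | sub {Sgn G e A B} : Syn Psi Sgn G e A → Subty Sgn A B → Chk Psi Sgn G e B
  | lam {Sgn G x e A B} : Chk Psi Sgn (G ++ [(x, A)]) e B →
      Chk Psi Sgn G (.lam x e) (.arr A B)
  | inter {Sgn G v A1 A2} : IsAValue v → Chk Psi Sgn G v A1 → Chk Psi Sgn G v A2 →
      Chk Psi Sgn G v (.inter A1 A2)
  | pair {Sgn G e1 e2 A1 A2} : Chk Psi Sgn G e1 A1 → Chk Psi Sgn G e2 A2 →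
      Chk Psi Sgn G (.pair e1 e2) (.prod A1 A2)
  | unit {Sgn G} : Chk Psi Sgn G .unit .unit
  | dataI {Sgn G c e A s} : ConTyping Sgn c A s → Chk Psi Sgn G e A →
      Chk Psi Sgn G (.con c e) (.sort s)
  | dataE {Sgn G e ms A B} : Syn Psi Sgn G e A → MatchChk Psi Sgn G A .wild ms B →
      Chk Psi Sgn G (.case_ e ms) B
  | declare {Sgn Sg' G e B} : SigWF Psi (Sgn ++ Sg') → TypeWF Sgn B →
      Chk Psi (Sgn ++ Sg') G e B → Chk Psi Sgn G (.declare Sg' e) B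

/-- Σ; Γ ⊢ e ⇒ A (synthesis). -/
inductive Syn (Psi : UrSig) : Sig → Ctx → AExp → Ty → Prop
  | var {Sgn G x A} : (x, A) ∈ G → Syn Psi Sgn G (.var x) A
  | anno {Sgn G e As A} : A ∈ As → Chk Psi Sgn G e A → Syn Psi Sgn G (.anno e As) A
  | app {Sgn G e1 e2 A B} : Syn Psi Sgn G e1 (.arr A B) → Chk Psi Sgn G e2 A →
      Syn Psi Sgn G (.app e1 e2) B
  | interE1 {Sgn G e A1 A2} : Syn Psi Sgn G e (.inter A1 A2) → Syn Psi Sgn G e A1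
  | interE2 {Sgn G e A1 A2} : Syn Psi Sgn G e (.inter A1 A2) → Syn Psi Sgn G e A2

/-- Σ; Γ; A; p ⊢ ms ⇐ B (bidirectional match typing). -/
inductive MatchChk (Psi : UrSig) : Sig → Ctx → Ty → Pat → AArms → Ty → Prop
  | nil {Sgn G A p D} : intersect Sgn A p = (∅ : Set (Ctx × Ty)) →
      MatchChk Psi Sgn G A p .nil D
  | cons {Sgn G A p p1 e1 ms D t q np1 q'} :
      Refines Sgn A t → PatType Psi p1 t →
      pinter p p1 = some q →
      (∀ G' B, (G', B) ∈ intersect Sgn A q → Chk Psi Sgn (G ++ G') e1 D) →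
      pcomp Psi p1 = some np1 →
      pinter p np1 = some q' →
      MatchChk Psi Sgn G A q' ms D →
      MatchChk Psi Sgn G A p (.cons p1 e1 ms) D
end

/-! Induction along the recursion of `pinter`. The `⊔`, constructor and pair clauses follow from
the induction hypotheses once both matchings are split at the head of `v`. A clause producing `∅`,
which matches nothing, is never reached: `∅ ∩ p` and `p ∩ ∅` would need a match against `∅`, and a
head clash (distinct constructors, or a pair against a constructor) would give `v` two heads. -/

universe u

theorem Option.bind_bind_pure_eq_some {α β γ : Type u} {x : Option α} {y : Option β}
    {f : α → β → γ} {c : γ} :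
    (do let a ← x; let b ← y; pure (f a b)) = some c ↔
      ∃ a, x = some a ∧ ∃ b, y = some b ∧ f a b = c := by
  simp [Option.bind_eq_some_iff]

def Pat.Accepts (p : Pat) (v : Exp) : Prop := ∃ th, Matches p v th

namespace Pat

theorem not_accepts_empty (v : Exp) : ¬ Pat.empty.Accepts v := by
  rintro ⟨_, ⟨⟩⟩

theorem accepts_or {p1 p2 : Pat} {v : Exp} :
    (Pat.or p1 p2).Accepts v ↔ p1.Accepts v ∨ p2.Accepts v := by
  constructor
  · rintro ⟨th, h⟩
    cases h with
    | or1 h => exact .inl ⟨th, h⟩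
    | or2 h => exact .inr ⟨th, h⟩
  · rintro (⟨th, h⟩ | ⟨th, h⟩)
    exacts [⟨th, .or1 h⟩, ⟨th, .or2 h⟩]

theorem accepts_con {c : ConName} {p : Pat} {v : Exp} :
    (Pat.con c p).Accepts v ↔ ∃ v', v = .con c v' ∧ p.Accepts v' := by
  constructor
  · rintro ⟨th, h⟩
    cases h with
    | con h => exact ⟨_, rfl, th, h⟩
  · rintro ⟨v', rfl, th, h⟩
    exact ⟨th, .con h⟩

theorem accepts_pair {p1 p2 : Pat} {v : Exp} :
    (Pat.pair p1 p2).Accepts v ↔ ∃ v1 v2, v = .pair v1 v2 ∧ p1.Accepts v1 ∧ p2.Accepts v2 := by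
  constructor
  · rintro ⟨_, h⟩
    cases h with
    | pair h1 h2 => exact ⟨_, _, rfl, ⟨_, h1⟩, ⟨_, h2⟩⟩
  · rintro ⟨v1, v2, rfl, ⟨th1, h1⟩, ⟨th2, h2⟩⟩
    exact ⟨_, .pair h1 h2⟩

theorem accepts_pinter {p1 p2 q : Pat} {v : Exp} (h1 : p1.Accepts v) (h2 : p2.Accepts v)
    (hq : pinter p1 p2 = some q) : q.Accepts v := by
  fun_induction pinter p1 p2 generalizing q v with
  | case1 => exact absurd h1 (not_accepts_empty v)
  | case2 => exact absurd h2 (not_accepts_empty v)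
  | case3 => exact Option.some_injective _ hq ▸ h2
  | case4 => exact Option.some_injective _ hq ▸ h1
  | case5 p1 p2 p _ _ ih1 ih2 =>
    obtain ⟨q1, hq1, q2, hq2, rfl⟩ := Option.bind_bind_pure_eq_some.1 hq
    exact accepts_or.2 ((accepts_or.1 h1).imp (ih1 · h2 hq1) (ih2 · h2 hq2))
  | case6 p p1 p2 _ _ _ ih1 ih2 =>
    obtain ⟨q1, hq1, q2, hq2, rfl⟩ := Option.bind_bind_pure_eq_some.1 hq
    exact accepts_or.2 ((accepts_or.1 h2).imp (ih1 h1 · hq1) (ih2 h1 · hq2))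
  | case7 p1 c p2 ih =>
    obtain ⟨q', hq', rfl⟩ := Option.map_eq_some_iff.1 hq
    obtain ⟨v1, rfl, hv1⟩ := accepts_con.1 h1
    obtain ⟨v2, hv, hv2⟩ := accepts_con.1 h2
    cases hv
    exact accepts_con.2 ⟨v1, rfl, ih hv1 hv2 hq'⟩
  | case8 c1 p1 c2 p2 hc =>
    obtain ⟨v1, rfl, -⟩ := accepts_con.1 h1
    obtain ⟨v2, hv, -⟩ := accepts_con.1 h2
    exact absurd (Exp.con.inj hv).1 hc
  | case9 =>
    obtain ⟨v1, v2, rfl, -⟩ := accepts_pair.1 h1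
    obtain ⟨v', hv, -⟩ := accepts_con.1 h2
    cases hv
  | case10 =>
    obtain ⟨v', rfl, -⟩ := accepts_con.1 h1
    obtain ⟨v1, v2, hv, -⟩ := accepts_pair.1 h2
    cases hv
  | case11 p11 p12 p21 p22 ih1 ih2 =>
    obtain ⟨q1, hq1, q2, hq2, rfl⟩ := Option.bind_bind_pure_eq_some.1 hq
    obtain ⟨v1, v2, rfl, hv11, hv12⟩ := accepts_pair.1 h1
    obtain ⟨v1', v2', hv, hv21, hv22⟩ := accepts_pair.1 h2
    cases hv
    exact accepts_pair.2 ⟨v1, v2, rfl, ih1 hv11 hv21 hq1, ih2 hv12 hv22 hq2⟩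
  | case12 => cases hq

end Pat

/-- **Pattern intersection preserves matching** (Statement 10). -/
theorem pattern_intersection_matches (p1 p2 q : Pat) (v : Exp)
    (th1 th2 : List (Var × Exp)) (hv : IsValue v)
    (h1 : Matches p1 v th1) (h2 : Matches p2 v th2)
    (hq : pinter p1 p2 = some q) :
    ∃ th, Matches q v th :=
  Pat.accepts_pinter ⟨th1, h1⟩ ⟨th2, h2⟩ hq
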